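/- arXiv:2409.06375 — 4 statements merged into one kernel-verified Lean document; each statement's English description precedes it below -/
import Mathlib

section
/- Let N and H be groups and let φ, ψ : H → Aut(N) be group homomorphisms. The semidirect products N ⋊_φ H and N ⋊_ψ H are equivalent as extensions of H by N if and only if there exists a φ-derivation α : H → N such that ψ(h) = conj(α(h)) ∘ φ(h) for all h ∈ H. -/
open SemidirectProduct

/-- Let `N`, `H` be groups and `φ ψ : H →* Aut N` homomorphisms. The semidirect
products `N ⋊[φ] H` and `N ⋊[ψ] H` are equivalent as extensions of `H` by `N` if and only if
there is a `φ`-derivation `α : H → N` with `ψ h = conj (α h) ∘ φ h` for all `h`. -/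
theorem stmt_2 {N H : Type*} [Group N] [Group H] (φ ψ : H →* MulAut N) :
    (∃ F : N ⋊[ψ] H ≃* N ⋊[φ] H,
        (∀ n : N, F (inl n) = inl n) ∧
        ∀ x : N ⋊[ψ] H, rightHom (F x) = rightHom x) ↔
      ∃ α : H → N, (∀ h₁ h₂ : H, α h₁ * φ h₁ (α h₂) = α (h₁ * h₂)) ∧
        ∀ h : H, ψ h = MulAut.conj (α h) * φ h := by
  constructor
  · rintro ⟨F, hFl, hFr⟩
    refine ⟨fun h => (F (inr h)).left, ?_, ?_⟩
    · intro h₁ h₂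
      have : F (inr (h₁ * h₂)) = F (inr h₁) * F (inr h₂) := by
        rw [← map_mul, ← map_mul]
      have hr : ∀ h : H, (F (inr h)).right = h := fun h => by
        have := hFr (inr h); simp_all [rightHom]
      have := congrArg SemidirectProduct.left this
      simpa [mul_left, hr] using this.symm
    · intro h
      ext n
      have key : F (inr h * inl n) = F (inr h) * inl n := by
        rw [map_mul, hFl]
      have h1 : inr h * inl n = (inl (ψ h n) * inr h : N ⋊[ψ] H) := by
        ext <;> simp
      rw [h1, map_mul, hFl] at key
      have := congrArg SemidirectProduct.left key
      have hr : (F (inr h)).right = h := by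
        have := hFr (inr h); simp_all [rightHom]
      simp only [mul_left, right_inl, left_inl, hr, map_one, MulAut.one_apply] at this
      simp only [MulAut.mul_apply, MulAut.conj_apply]
      exact eq_mul_inv_iff_mul_eq.mpr this
  · rintro ⟨α, hder, hconj⟩
    have hα1 : α 1 = 1 := by
      have := hder 1 1
      simpa using this
    refine ⟨⟨⟨fun x => ⟨x.left * α x.right, x.right⟩,
        fun x => ⟨x.left * (α x.right)⁻¹, x.right⟩, ?_, ?_⟩, ?_⟩, ?_, ?_⟩
    · intro x; ext <;> simp [mul_assoc]
    · intro x; ext <;> simp [mul_assoc]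
    · intro x y
      ext
      · simp only [mul_left, mul_right]
        rw [← hder, hconj x.right]
        simp [MulAut.conj_apply, mul_assoc]
      · simp [mul_right]
    · intro n; ext <;> simp [hα1]
    · intro x; simp [rightHom]
end

section
/- Let N and H be groups and let φ : H → Aut(N) be a group homomorphism. The following are equivalent: (a) for every function β : H → N such that ψ : h ↦ conj(β(h)) ∘ φ(h) is a group homomorphism, the semidirect product N ⋊_ψ H is equivalent as an extension of H by N to N ⋊_φ H; (b) for every function β : H → N with β(h₁)·φ(h₁)(β(h₂))·β(h₁h₂)⁻¹ ∈ Z(N) for all h₁,h₂ ∈ H, there exists a φ-derivation α : H → N with α(h)·β(h)⁻¹ ∈ Z(N) for all h ∈ H (i.e. the natural map from φ-derivations H → N to derivations H → Inn(N) is surjective). -/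
open SemidirectProduct

private lemma aux_center {N : Type*} [Group N] {a b : N}
    (h : ∀ m : N, a * m * a⁻¹ = b * m * b⁻¹) : a * b⁻¹ ∈ Subgroup.center N := by
  rw [Subgroup.mem_center_iff]
  intro g
  have h1 : a * (b⁻¹ * g * b) * a⁻¹ = g := by rw [h (b⁻¹ * g * b)]; group
  calc g * (a * b⁻¹) = (a * (b⁻¹ * g * b) * a⁻¹) * (a * b⁻¹) := by rw [h1]
    _ = a * b⁻¹ * g := by group

private lemma aux_conj {N : Type*} [Group N] {a b : N}
    (h : a * b⁻¹ ∈ Subgroup.center N) (m : N) : a * m * a⁻¹ = b * m * b⁻¹ := by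
  have hz := Subgroup.mem_center_iff.mp h
  calc a * m * a⁻¹ = (a * b⁻¹) * (b * m * b⁻¹) * (a * b⁻¹)⁻¹ := by group
    _ = (b * m * b⁻¹) * (a * b⁻¹) * (a * b⁻¹)⁻¹ := by rw [hz]
    _ = b * m * b⁻¹ := by group

/-- Let `N`, `H` be groups and `φ : H →* Aut N`. The following are equivalent:
(a) for every function `β : H → N` such that `ψ : h ↦ conj (β h) ∘ φ h` is a group homomorphism,
the semidirect product `N ⋊[ψ] H` is equivalent as an extension of `H` by `N` to `N ⋊[φ] H`;
(b) for every function `β : H → N` with `β h₁ * φ h₁ (β h₂) * (β (h₁ h₂))⁻¹ ∈ Z(N)` for all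
`h₁, h₂`, there exists a `φ`-derivation `α : H → N` with `α h * (β h)⁻¹ ∈ Z(N)` for all `h`
(i.e. the natural map `Der_φ(H, N) → Der(H, Inn N)` is surjective). -/
theorem stmt_3 {N H : Type*} [Group N] [Group H] (φ : H →* MulAut N) :
    (∀ (β : H → N) (ψ : H →* MulAut N), (∀ h : H, ψ h = MulAut.conj (β h) * φ h) →
        ∃ F : N ⋊[ψ] H ≃* N ⋊[φ] H,
          (∀ n : N, F (inl n) = inl n) ∧
          ∀ x : N ⋊[ψ] H, rightHom (F x) = rightHom x) ↔
      (∀ β : H → N,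
        (∀ h₁ h₂ : H, β h₁ * φ h₁ (β h₂) * (β (h₁ * h₂))⁻¹ ∈ Subgroup.center N) →
        ∃ α : H → N, (∀ h₁ h₂ : H, α h₁ * φ h₁ (α h₂) = α (h₁ * h₂)) ∧
          ∀ h : H, α h * (β h)⁻¹ ∈ Subgroup.center N) := by
  constructor
  · -- (a) → (b)
    intro hA β hβ
    have hb1 : β 1 ∈ Subgroup.center N := by simpa using hβ 1 1
    have hb1' := Subgroup.mem_center_iff.mp hb1
    -- build the homomorphism ψ
    refine ?_
    set ψ : H →* MulAut N :=
      { toFun := fun h => MulAut.conj (β h) * φ h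
        map_one' := by
          ext n
          simp only [MulAut.mul_apply, MulAut.conj_apply, map_one, MulAut.one_apply]
          rw [← hb1' n]
          group
        map_mul' := by
          intro h₁ h₂
          ext n
          simp only [MulAut.mul_apply, MulAut.conj_apply, map_mul, map_inv]
          have key := aux_conj (hβ h₁ h₂) (φ h₁ (φ h₂ n))
          rw [← key]
          group } with hψdef
    obtain ⟨F, hFl, hFr⟩ := hA β ψ (fun h => rfl)
    have hr : ∀ h : H, (F (inr h)).right = h := by
      intro h
      have := hFr (inr h)
      rwa [rightHom_inr] at this
    set α : H → N := fun h => (F (inr h)).left with hα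
    have hψapp : ∀ (h : H) (n : N), ψ h n = β h * φ h n * (β h)⁻¹ := fun _ _ => rfl
    refine ⟨α, ?_, ?_⟩
    · -- derivation property
      intro h₁ h₂
      have e : F (inr (h₁ * h₂)) = F (inr h₁) * F (inr h₂) := by
        rw [← map_mul, ← map_mul]
      have e' := congrArg SemidirectProduct.left e
      rw [mul_left, hr h₁] at e'
      exact e'.symm
    · -- central property
      intro h
      have key2 : ∀ n : N, ψ h n * α h = α h * φ h n := by
        intro n
        have emul : (inr h : N ⋊[ψ] H) * inl n = inl (ψ h n) * inr h := by
          ext <;> simp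
        have e2 : F (inr h) * inl n = inl (ψ h n) * F (inr h) := by
          have := congrArg F emul
          rwa [map_mul, map_mul, hFl, hFl] at this
        have e3 := congrArg SemidirectProduct.left e2
        rw [mul_left, mul_left, hr h, left_inl, left_inl, right_inl, map_one,
          MulAut.one_apply] at e3
        exact e3.symm
      apply aux_center
      intro m
      obtain ⟨n, rfl⟩ := (φ h).surjective m
      have k := key2 n
      rw [hψapp] at k
      rw [← k]
      group
  · -- (b) → (a)
    intro hB β ψ hψ
    have hβc : ∀ h₁ h₂ : H, β h₁ * φ h₁ (β h₂) * (β (h₁ * h₂))⁻¹ ∈ Subgroup.center N := by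
      intro h₁ h₂
      apply aux_center
      intro m
      obtain ⟨n, rfl⟩ := (φ (h₁ * h₂)).surjective m
      have h0 : ψ (h₁ * h₂) n = ψ h₁ (ψ h₂ n) := by rw [map_mul]; rfl
      rw [hψ, hψ, hψ] at h0
      simp only [MulAut.mul_apply, MulAut.conj_apply] at h0
      rw [h0]
      simp only [map_mul, map_inv, MulAut.mul_apply]
      group
    obtain ⟨α, hder, hcen⟩ := hB β hβc
    have hα1 : α 1 = 1 := by
      have h := hder 1 1
      simp only [map_one, MulAut.one_apply, mul_one] at h
      exact mul_left_cancel (a := α 1) (by rw [mul_one]; exact h)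
    have hkey : ∀ (h : H) (n : N), ψ h n * α h = α h * φ h n := by
      intro h n
      have hz := Subgroup.mem_center_iff.mp (hcen h)
      rw [hψ]
      simp only [MulAut.mul_apply, MulAut.conj_apply]
      calc β h * φ h n * (β h)⁻¹ * α h
          = (β h * φ h n) * ((β h)⁻¹ * (α h * (β h)⁻¹)) * β h := by group
        _ = (β h * φ h n) * ((α h * (β h)⁻¹) * (β h)⁻¹) * β h := by rw [hz ((β h)⁻¹)]
        _ = β h * (φ h n * (α h * (β h)⁻¹)) := by group
        _ = β h * ((α h * (β h)⁻¹) * φ h n) := by rw [hz (φ h n)]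
        _ = (β h * (α h * (β h)⁻¹)) * φ h n := by group
        _ = ((α h * (β h)⁻¹) * β h) * φ h n := by rw [hz (β h)]
        _ = α h * φ h n := by group
    refine ⟨{ toFun := fun x => ⟨x.left * α x.right, x.right⟩
              invFun := fun x => ⟨x.left * (α x.right)⁻¹, x.right⟩
              left_inv := fun x => by ext <;> simp
              right_inv := fun x => by ext <;> simp
              map_mul' := ?_ }, ?_, ?_⟩
    · intro a b
      ext
      · show (a.left * ψ a.right b.left) * α (a.right * b.right)
            = (a.left * α a.right) * φ a.right (b.left * α b.right)
        rw [← hder, map_mul]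
        have k := hkey a.right b.left
        calc (a.left * ψ a.right b.left) * (α a.right * φ a.right (α b.right))
            = a.left * (ψ a.right b.left * α a.right) * φ a.right (α b.right) := by group
          _ = a.left * (α a.right * φ a.right b.left) * φ a.right (α b.right) := by rw [k]
          _ = (a.left * α a.right) * (φ a.right b.left * φ a.right (α b.right)) := by group
      · rfl
    · intro n
      ext
      · show n * α 1 = n
        rw [hα1, mul_one]
      · rfl
    · intro x
      rfl
end

section
/- Let N and H be groups. Let pr : Aut(N) → Out(N) be the canonical projection and let s : Out(N) → Aut(N) be a group homomorphism with pr ∘ s = id (a splitting of the automorphism sequence). Let ϖ : H → Out(N) be a group homomorphism and set φ := s ∘ ϖ : H → Aut(N). Suppose α ∈ Aut(N) and β ∈ Aut(H) satisfy [α]·ϖ(β⁻¹(h))·[α]⁻¹ = ϖ(h) in Out(N) for all h ∈ H, and define ψ : H → Aut(N) by ψ(h) = α ∘ φ(β⁻¹(h)) ∘ α⁻¹. Then the semidirect products N ⋊_ψ H and N ⋊_φ H are equivalent as extensions of H by N: there is a group isomorphism F : N ⋊_ψ H → N ⋊_φ H with F ∘ inl = inl and rightHom ∘ F = rightHom. 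-/
open SemidirectProduct

/-- The subgroup `Inn N` of inner automorphisms is normal in `Aut N`. -/
instance innRangeNormal (N : Type*) [Group N] :
    ((MulAut.conj : N →* MulAut N).range).Normal := by
  constructor
  rintro x ⟨n, rfl⟩ α
  refine ⟨α n, ?_⟩
  ext m
  simp [MulAut.conj_apply, mul_assoc, MulEquiv.apply_symm_apply, map_mul, map_inv]

/-- The outer automorphism group `Out N = Aut N / Inn N`. -/
abbrev OutGroup (N : Type*) [Group N] :=
  MulAut N ⧸ (MulAut.conj : N →* MulAut N).range

/-- Let `N`, `H` be groups, `pr : Aut N → Out N` the canonical projection and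
`s : Out N → Aut N` a homomorphism with `pr ∘ s = id`. Let `ϖ : H →* Out N` and set
`φ := s ∘ ϖ`. If `α ∈ Aut N` and `β ∈ Aut H` satisfy `[α] · ϖ (β⁻¹ h) · [α]⁻¹ = ϖ h` in
`Out N` for all `h`, and `ψ : h ↦ α ∘ φ (β⁻¹ h) ∘ α⁻¹`, then the semidirect products
`N ⋊[ψ] H` and `N ⋊[φ] H` are equivalent as extensions of `H` by `N`. -/
theorem stmt_5 {N H : Type*} [Group N] [Group H]
    (s : OutGroup N →* MulAut N)
    (hs : ∀ x : OutGroup N,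
      QuotientGroup.mk' (MulAut.conj : N →* MulAut N).range (s x) = x)
    (ϖ : H →* OutGroup N)
    (α : MulAut N) (β : MulAut H)
    (hαβ : ∀ h : H,
      QuotientGroup.mk' (MulAut.conj : N →* MulAut N).range α * ϖ (β⁻¹ h) *
        (QuotientGroup.mk' (MulAut.conj : N →* MulAut N).range α)⁻¹ = ϖ h)
    (ψ : H →* MulAut N)
    (hψ : ∀ h : H, ψ h = α * (s.comp ϖ) (β⁻¹ h) * α⁻¹) :
    ∃ F : N ⋊[ψ] H ≃* N ⋊[s.comp ϖ] H,
      (∀ n : N, F (inl n) = inl n) ∧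
      ∀ x : N ⋊[ψ] H, rightHom (F x) = rightHom x := by

  set pr := (QuotientGroup.mk' (MulAut.conj : N →* MulAut N).range) with hpr
  obtain ⟨m, hm⟩ : ∃ m : N, MulAut.conj m = α * (s (pr α))⁻¹ := by
    have h1 : pr (α * (s (pr α))⁻¹) = 1 := by
      simp [map_mul, map_inv, hs]
    exact (QuotientGroup.eq_one_iff _).mp h1
  set φ := s.comp ϖ with hφ
  have key : ∀ h : H, ψ h = MulAut.conj m * φ h * (MulAut.conj m)⁻¹ := by
    intro h
    have hφh : φ h = s (pr α) * s (ϖ (β⁻¹ h)) * (s (pr α))⁻¹ := by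
      have := hαβ h
      simp only [hφ, MonoidHom.comp_apply]
      rw [← this, map_mul, map_mul, map_inv]
    rw [hψ h, hφh, hm]
    group
    rfl
  have keyn : ∀ (h : H) (n : N), ψ h n = m * φ h (m⁻¹ * n * m) * m⁻¹ := by
    intro h n
    rw [key h]
    simp [MulAut.conj_apply, MulAut.conj_symm_apply, mul_assoc]
  refine ⟨{
    toFun := fun x => ⟨x.1 * m * (φ x.2 m)⁻¹, x.2⟩
    invFun := fun x => ⟨x.1 * φ x.2 m * m⁻¹, x.2⟩
    left_inv := by
      intro x
      ext <;> simp [mul_assoc]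
    right_inv := by
      intro x
      ext <;> simp [mul_assoc]
    map_mul' := by
      intro x y
      ext
      · show (x.1 * ψ x.2 y.1) * m * (φ (x.2 * y.2) m)⁻¹ =
          (x.1 * m * (φ x.2 m)⁻¹) * φ x.2 (y.1 * m * (φ y.2 m)⁻¹)
        rw [keyn x.2 y.1]
        simp only [map_mul, map_inv]
        group
        rfl
      · rfl }, ?_, ?_⟩
  · intro n
    ext
    · show n * m * (φ 1 m)⁻¹ = n
      simp
    · rfl
  · intro x
    rfl
end

section
/- Say a group K has property 𝔉 if, for every finite group H, the set of group homomorphisms from H to K has finitely many orbits under the action of K by conjugation (k·f := (h ↦ k·f(h)·k⁻¹)). If K has property 𝔉 and K' is a subgroup of K of finite index, then K' has property 𝔉. -/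
/-- A group `K` has property `𝔉` if for every finite group `H` the set of group homomorphisms
`H →* K` has finitely many orbits under the conjugation action of `K`, where `k : K` acts on
`f : H →* K` by `(k · f) h = k * f h * k⁻¹`.  Equivalently, there is a finite set of
homomorphisms meeting every conjugation orbit. -/
def HasPropertyF (K : Type*) [Group K] : Prop :=
  ∀ (H : Type) [Group H] [Finite H],
    ∃ S : Set (H →* K), S.Finite ∧
      ∀ f : H →* K, ∃ g ∈ S, ∃ k : K, ∀ h : H, f h = k * g h * k⁻¹

/-!
Fix a finite right transversal `T` of `K'` in `K`. If `f : H →* K'` is `K`-conjugate to `g` by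
`k = k' * t` with `k' ∈ K'` and `t ∈ T`, then `f` is `K'`-conjugate by `k'` to `h ↦ t * g h * t⁻¹`,
which therefore takes values in `K'`. Hence the finitely many homomorphisms `H →* K'` of the form
`conj t ∘ g`, with `t ∈ T` and `g` running over representatives of the `K`-orbits, meet every
`K'`-orbit.
-/

namespace Subgroup

variable {K H : Type*} [Group K] [Group H] (K' : Subgroup K)

theorem finite_setOf_subtype_comp_mem {s : Set (H →* K)} (hs : s.Finite) :
    {f : H →* K' | K'.subtype.comp f ∈ s}.Finite :=
  hs.preimage fun _ _ _ _ h => (MonoidHom.cancel_left K'.subtype_injective).mp h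

variable {K'}

theorem exists_subtype_comp_eq_conj_comp_of_conj_mul (f : H →* K') (g : H →* K) (k' : K')
    (t : K) (hf : ∀ h, (f h : K) = (k' * t) * g h * (k' * t)⁻¹) :
    ∃ f' : H →* K', K'.subtype.comp f' = (MulAut.conj t : K →* K).comp g ∧
      ∀ h, f h = k' * f' h * k'⁻¹ := by
  refine ⟨(MulAut.conj k'⁻¹ : K' →* K').comp f, ?_, fun h => ?_⟩
  · ext h
    simp only [MonoidHom.comp_apply, MonoidHom.coe_coe, MulAut.conj_apply, coe_subtype]
    push_cast [hf]
    group
  · simp only [MonoidHom.comp_apply, MonoidHom.coe_coe, MulAut.conj_apply]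
    group

end Subgroup

/-- If `K` has property `𝔉` and `K'` is a finite-index subgroup of `K`, then
`K'` has property `𝔉`. -/
theorem stmt_10 {K : Type*} [Group K] (K' : Subgroup K) (hK : HasPropertyF K)
    (hindex : K'.FiniteIndex) : HasPropertyF K' := by
  intro H _ _
  obtain ⟨S, hSfin, hS⟩ := hK H
  obtain ⟨T, hT, -⟩ := K'.exists_isComplement_right 1
  refine ⟨{f | K'.subtype.comp f ∈ Set.image2 (fun t g => (MulAut.conj t : K →* K).comp g) T S},
    K'.finite_setOf_subtype_comp_mem (hT.finite_right.image2 _ hSfin), fun f => ?_⟩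
  obtain ⟨g, hg, k, hk⟩ := hS (K'.subtype.comp f)
  obtain ⟨⟨k', t⟩, rfl⟩ := (hT.existsUnique k).exists
  obtain ⟨f', hf', hf⟩ := Subgroup.exists_subtype_comp_eq_conj_comp_of_conj_mul f g k' t hk
  exact ⟨f', ⟨t, t.2, g, hg, hf'.symm⟩, k', hf⟩
end
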